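/- In ℝ⁴ with the standard Euclidean inner product ⟨·,·⟩, define for a,b,c ∈ ℝ⁴ the vector w(a,b,c) by ⟨w(a,b,c), x⟩ = det(x,a,b,c) for all x, and for modes (ξᵢ,kᵢ) define the star bracket [ξ₁,ξ₂]* := ⟨k₁+k₂, ξ₂⟩ξ₁ − ⟨k₁+k₂, ξ₁⟩ξ₂ + w(k₁+k₂, ξ₁, ξ₂). Then for four modes with k₁+k₂+k₃+k₄ = 0: −⟨[ξ₁,ξ₂]*, [ξ₃,ξ₄]*⟩ = ⟨k₁+k₂, k₁+k₂⟩·(⟨ξ₁,ξ₃⟩⟨ξ₂,ξ₄⟩ − ⟨ξ₂,ξ₃⟩⟨ξ₁,ξ₄⟩ + det(ξ₁,ξ₂,ξ₃,ξ₄)). -/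
import Mathlib


namespace Stmt3

noncomputable section

open scoped RealInnerProductSpace

/-- `ℝ⁴` with the standard Euclidean inner product. -/
abbrev E4 := EuclideanSpace ℝ (Fin 4)

/-- The standard determinant of four vectors in `ℝ⁴` (the canonical
alternating 4-form). -/
def det4 (a b c d : E4) : ℝ :=
  Matrix.det (Matrix.of ![(fun i => a i), (fun i => b i), (fun i => c i), (fun i => d i)])

lemma det4_eq (a b c d : E4) :
    det4 a b c d =
      a 0*(b 1*(c 2*d 3 - c 3*d 2) - b 2*(c 1*d 3 - c 3*d 1) + b 3*(c 1*d 2 - c 2*d 1))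
    - a 1*(b 0*(c 2*d 3 - c 3*d 2) - b 2*(c 0*d 3 - c 3*d 0) + b 3*(c 0*d 2 - c 2*d 0))
    + a 2*(b 0*(c 1*d 3 - c 3*d 1) - b 1*(c 0*d 3 - c 3*d 0) + b 3*(c 0*d 1 - c 1*d 0))
    - a 3*(b 0*(c 1*d 2 - c 2*d 1) - b 1*(c 0*d 2 - c 2*d 0) + b 2*(c 0*d 1 - c 1*d 0)) := by
  rw [det4, Matrix.det_succ_row_zero, Fin.sum_univ_four]
  simp [Matrix.det_fin_three, Fin.succAbove, show (Fin.succ 2:Fin 4)=3 from rfl,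
    show (Fin.castSucc 2:Fin 4)=2 from rfl, show ¬((2:Fin 4)<2) from by decide,
    show ((2:Fin 4)<3) from by decide, show ((3:Fin 4):ℕ)=3 from rfl]
  ring

/-- The star bracket of two modes `(ξ₁,k₁)`, `(ξ₂,k₂)`, given a map `w` with
`⟨w(a,b,c), x⟩ = det(x,a,b,c)`:
`[ξ₁,ξ₂]* = ⟨k₁+k₂,ξ₂⟩ξ₁ − ⟨k₁+k₂,ξ₁⟩ξ₂ + w(k₁+k₂,ξ₁,ξ₂)`. -/
def starBr (w : E4 → E4 → E4 → E4) (p q : E4 × E4) : E4 :=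
  ⟪p.2 + q.2, q.1⟫ • p.1 - ⟪p.2 + q.2, p.1⟫ • q.1 + w (p.2 + q.2) p.1 q.1

/-- For four modes with `k₁+k₂+k₃+k₄ = 0`:
`−⟨[ξ₁,ξ₂]*,[ξ₃,ξ₄]*⟩ = (k₁+k₂)²(⟨ξ₁,ξ₃⟩⟨ξ₂,ξ₄⟩ − ⟨ξ₂,ξ₃⟩⟨ξ₁,ξ₄⟩ + det(ξ₁,ξ₂,ξ₃,ξ₄))`. -/
theorem star_bracket_square (w : E4 → E4 → E4 → E4)
    (hw : ∀ a b c x : E4, ⟪w a b c, x⟫ = det4 x a b c)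
    (ξ₁ k₁ ξ₂ k₂ ξ₃ k₃ ξ₄ k₄ : E4) (h : k₁ + k₂ + k₃ + k₄ = 0) :
    -⟪starBr w (ξ₁, k₁) (ξ₂, k₂), starBr w (ξ₃, k₃) (ξ₄, k₄)⟫
      = ⟪k₁ + k₂, k₁ + k₂⟫
          * (⟪ξ₁, ξ₃⟫ * ⟪ξ₂, ξ₄⟫ - ⟪ξ₂, ξ₃⟫ * ⟪ξ₁, ξ₄⟫ + det4 ξ₁ ξ₂ ξ₃ ξ₄) := by
  have wc : ∀ (a b c : E4) (i : Fin 4),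
      w a b c i = det4 (EuclideanSpace.single i 1) a b c := by
    intro a b c i
    have := hw a b c (EuclideanSpace.single i 1)
    simpa [EuclideanSpace.inner_single_right] using this
  have h34 : k₃ + k₄ = -(k₁ + k₂) :=
    eq_neg_of_add_eq_zero_right (by rw [← h]; abel)
  simp only [starBr]
  rw [h34]
  simp only [PiLp.inner_apply, RCLike.inner_apply, starRingEnd_apply, star_trivial,
    Fin.sum_univ_four, PiLp.add_apply, PiLp.sub_apply, PiLp.smul_apply, PiLp.neg_apply,
    smul_eq_mul, wc, det4_eq, EuclideanSpace.single_apply]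
  simp
  ring

end

end Stmt3
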